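/- arXiv:2410.15390 — 3 statements merged into one kernel-verified Lean document; each statement's English description precedes it below -/
import Mathlib

section
/- Let $R$ be a finite-dimensional symmetric $\mathbb{K}$-algebra with symmetric structure $\varphi: R \to \mathbb{K}$. For any finitely generated left $R$-module $M$ and any finitely generated projective left $R$-module $P$, the map $\mathfrak{t}_{M,P}: \mathrm{Hom}_R(M,P) \to D\,\mathrm{Hom}_R(P,M)$ given by $f \mapsto (g \mapsto \mathrm{tr}_P(f \circ g))$ is a $\mathbb{K}$-linear isomorphism. -/
/-!
Write `B f g = tr_P (f ∘ g)`. Symmetry of `φ` and the dual basis identity give, for the rank-one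
maps `p ↦ χ p • m` and `m ↦ λ m • p`, the cyclicity formulas `B f (χ · m) = φ (χ (f m))` and
`B (λ · p) g = φ (λ (g p))`. By nondegeneracy of `φ` the first shows that `B f = 0` forces
`θᵢ (f m) = 0` for all `i`, hence `f = 0`. Nondegeneracy and finite dimension make
`a ↦ φ (· * a)` an isomorphism `R ≃ D R`, so every `ψ ∈ D M` is `φ ∘ λ` for some
`λ ∈ Hom_R(M, R)`; by the second formula `B · g = 0` then forces `ψ (g xᵢ) = 0` for all `ψ`,
hence `g = 0`. A pairing of finite-dimensional spaces that is injective on both sides is perfect.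
-/

open Module

section Frobenius

variable {K R : Type*} [Field K] [Ring R] [Algebra K R] {φ : R →ₗ[K] K}

theorem eq_zero_of_forall_map_mul_eq_zero (hker : ∀ I : Ideal R, (∀ a ∈ I, φ a = 0) → I = ⊥)
    {a : R} (h : ∀ r, φ (r * a) = 0) : a = 0 := by
  have : Ideal.span {a} = ⊥ := hker _ fun b hb => by
    obtain ⟨r, rfl⟩ := Ideal.mem_span_singleton'.mp hb
    exact h r
  simpa using this

theorem eq_of_forall_map_mul_eq (hker : ∀ I : Ideal R, (∀ a ∈ I, φ a = 0) → I = ⊥)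
    {a b : R} (h : ∀ r, φ (r * a) = φ (r * b)) : a = b :=
  sub_eq_zero.mp <| eq_zero_of_forall_map_mul_eq_zero hker fun r => by simp [mul_sub, h]

theorem exists_forall_map_mul_eq [FiniteDimensional K R]
    (hker : ∀ I : Ideal R, (∀ a ∈ I, φ a = 0) → I = ⊥) (ψ : Dual K R) :
    ∃ a : R, ∀ s, φ (s * a) = ψ s := by
  let ρ : R →ₗ[K] Dual K R := (LinearMap.mul K R).flip.compr₂ φ
  have hρ : Function.Injective ρ := (injective_iff_map_eq_zero ρ).mpr fun a ha =>
    eq_zero_of_forall_map_mul_eq_zero hker fun s => LinearMap.congr_fun ha s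
  obtain ⟨a, ha⟩ := (LinearMap.injective_iff_surjective_of_finrank_eq_finrank
    (Subspace.dual_finrank_eq (V := R)).symm).mp hρ ψ
  exact ⟨a, fun s => LinearMap.congr_fun ha s⟩

theorem exists_linearMap_forall_map_eq [FiniteDimensional K R]
    (hker : ∀ I : Ideal R, (∀ a ∈ I, φ a = 0) → I = ⊥)
    {M : Type*} [AddCommGroup M] [Module R M] [Module K M] [IsScalarTower K R M]
    (ψ : Dual K M) : ∃ l : M →ₗ[R] R, ∀ m, φ (l m) = ψ m := by
  choose a ha using fun m : M =>
    exists_forall_map_mul_eq hker (ψ ∘ₗ (LinearMap.toSpanSingleton R M m).restrictScalars K)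
  simp only [LinearMap.coe_comp, LinearMap.coe_restrictScalars, Function.comp_apply,
    LinearMap.toSpanSingleton_apply] at ha
  refine ⟨{ toFun := a, map_add' := ?_, map_smul' := ?_ }, fun m => ?_⟩
  · exact fun m n => eq_of_forall_map_mul_eq hker fun s => by simp [mul_add, ha, smul_add]
  · exact fun r m => eq_of_forall_map_mul_eq hker fun s => by simp [← mul_assoc, ha, mul_smul]
  · simpa using ha m 1

end Frobenius

section TracePairing

variable {K R : Type*} [Field K] [Ring R] [Algebra K R] (φ : R →ₗ[K] K)
  {M P : Type*} [AddCommGroup M] [Module R M] [Module K M] [SMulCommClass R K M]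
  [IsScalarTower K R M] [AddCommGroup P] [Module R P] [Module K P] [SMulCommClass R K P]
  [IsScalarTower K R P] {ι : Type*} [Fintype ι] (x : ι → P) (θ : ι → P →ₗ[R] R)

theorem Module.Finite.of_dualBasis (hx : ∀ p : P, ∑ i, θ i p • x i = p) : Module.Finite R P :=
  .of_surjective (Fintype.linearCombination R x) fun p => ⟨fun i => θ i p, hx p⟩

variable {x θ}

theorem eq_zero_of_forall_dualBasis_apply_eq_zero (hx : ∀ p : P, ∑ i, θ i p • x i = p) {p : P}
    (h : ∀ i, θ i p = 0) : p = 0 := by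
  simpa [h] using (hx p).symm

theorem LinearMap.eq_zero_of_forall_dualBasis_eq_zero (hx : ∀ p : P, ∑ i, θ i p • x i = p)
    {N : Type*} [AddCommGroup N] [Module R N] {g : P →ₗ[R] N} (h : ∀ i, g (x i) = 0) :
    g = 0 := by
  ext p
  rw [← hx p]
  simp [h]

variable (x θ)

def dualBasisTrace : Module.End R P →ₗ[K] K where
  toFun h := ∑ i, φ (θ i (h (x i)))
  map_add' h h' := by simp [Finset.sum_add_distrib]
  map_smul' c h := by simp [Finset.mul_sum]

def tracePairing : (M →ₗ[R] P) →ₗ[K] (P →ₗ[R] M) →ₗ[K] K :=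
  LinearMap.mk₂ K (fun f g => dualBasisTrace φ x θ (f ∘ₗ g))
    (fun f f' g => by simp [LinearMap.add_comp])
    (fun c f g => by simp [LinearMap.smul_comp])
    (fun f g g' => by simp [LinearMap.comp_add])
    (fun c f g => by simp [LinearMap.comp_smul])

theorem tracePairing_apply (f : M →ₗ[R] P) (g : P →ₗ[R] M) :
    tracePairing φ x θ f g = ∑ i, φ (θ i (f (g (x i)))) :=
  rfl

variable {φ x θ}

theorem tracePairing_smulRight_right (hsym : ∀ r s : R, φ (r * s) = φ (s * r))
    (hx : ∀ p : P, ∑ i, θ i p • x i = p) (f : M →ₗ[R] P) (χ : P →ₗ[R] R) (m : M) :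
    tracePairing φ x θ f (χ.smulRight m) = φ (χ (f m)) := calc
  _ = ∑ i, φ (θ i (f m) * χ (x i)) := by
    simp only [tracePairing_apply, LinearMap.smulRight_apply, map_smul, smul_eq_mul, hsym]
  _ = φ (χ (f m)) := by
    conv_rhs => rw [← hx (f m)]
    simp

theorem tracePairing_smulRight_left (hsym : ∀ r s : R, φ (r * s) = φ (s * r))
    (hx : ∀ p : P, ∑ i, θ i p • x i = p) (l : M →ₗ[R] R) (p : P) (g : P →ₗ[R] M) :
    tracePairing φ x θ (l.smulRight p) g = φ (l (g p)) := calc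
  _ = ∑ i, φ (θ i p * l (g (x i))) := by
    simp only [tracePairing_apply, LinearMap.smulRight_apply, map_smul, smul_eq_mul, hsym]
  _ = φ (l (g p)) := by
    conv_rhs => rw [← hx p]
    simp

theorem tracePairing_injective (hsym : ∀ r s : R, φ (r * s) = φ (s * r))
    (hker : ∀ I : Ideal R, (∀ a ∈ I, φ a = 0) → I = ⊥) (hx : ∀ p : P, ∑ i, θ i p • x i = p) :
    Function.Injective (tracePairing (M := M) φ x θ) := by
  refine (injective_iff_map_eq_zero _).mpr fun f hf => LinearMap.ext fun m => ?_
  refine eq_zero_of_forall_dualBasis_apply_eq_zero hx fun i =>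
    eq_zero_of_forall_map_mul_eq_zero hker fun r => ?_
  have := tracePairing_smulRight_right hsym hx f (θ i) (r • m)
  rwa [hf, map_smul, map_smul, smul_eq_mul, LinearMap.zero_apply, eq_comm] at this

theorem tracePairing_flip_injective [FiniteDimensional K R]
    (hsym : ∀ r s : R, φ (r * s) = φ (s * r))
    (hker : ∀ I : Ideal R, (∀ a ∈ I, φ a = 0) → I = ⊥) (hx : ∀ p : P, ∑ i, θ i p • x i = p) :
    Function.Injective (tracePairing (M := M) φ x θ).flip := by
  refine (injective_iff_map_eq_zero _).mpr fun g hg =>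
    LinearMap.eq_zero_of_forall_dualBasis_eq_zero hx fun i => ?_
  refine (Module.forall_dual_apply_eq_zero_iff K _).mp fun ψ => ?_
  obtain ⟨l, hl⟩ := exists_linearMap_forall_map_eq hker ψ
  rw [← hl, ← tracePairing_smulRight_left hsym hx, ← LinearMap.flip_apply, hg,
    LinearMap.zero_apply]

end TracePairing

/-- Let `R` be a finite-dimensional symmetric `K`-algebra with symmetric
structure `φ`, `M` a finitely generated left `R`-module and `P` a finitely generated
projective left `R`-module, presented by a dual basis `(xᵢ, θᵢ)` (so that
`tr_P(h) = ∑ᵢ φ(θᵢ(h(xᵢ)))`).  Then `𝔱_{M,P} : Hom_R(M,P) → D Hom_R(P,M)`,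
`f ↦ (g ↦ tr_P(f ∘ g))`, is a `K`-linear isomorphism. -/
theorem trace_pairing_iso
    (K : Type*) [Field K] (R : Type*) [Ring R] [Algebra K R] [FiniteDimensional K R]
    (φ : R →ₗ[K] K)
    (hsym : ∀ r s : R, φ (r * s) = φ (s * r))
    (hker : ∀ I : Ideal R, (∀ a ∈ I, φ a = 0) → I = ⊥)
    (M : Type*) [AddCommGroup M] [Module R M] [Module K M]
    [SMulCommClass R K M] [IsScalarTower K R M] [Module.Finite R M]
    (P : Type*) [AddCommGroup P] [Module R P] [Module K P]
    [SMulCommClass R K P] [IsScalarTower K R P]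
    {m : ℕ} (x : Fin m → P) (θ : Fin m → P →ₗ[R] R)
    (hx : ∀ p : P, ∑ i, θ i p • x i = p) :
    ∃ e : (M →ₗ[R] P) ≃ₗ[K] Module.Dual K (P →ₗ[R] M),
      ∀ (f : M →ₗ[R] P) (g : P →ₗ[R] M),
        e f g = ∑ i, φ (θ i (f (g (x i)))) := by
  have := Module.Finite.of_dualBasis x θ hx
  have : Module.Finite K M := .trans R M
  have : Module.Finite K P := .trans R P
  have : FiniteDimensional K (M →ₗ[R] P) := LinearMap.finiteDimensional'
  have := LinearMap.IsPerfPair.of_injective (tracePairing_injective hsym hker hx)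
    (tracePairing_flip_injective (M := M) hsym hker hx)
  exact ⟨(tracePairing φ x θ).toPerfPair, fun f g => rfl⟩
end

section
/- Let $G, H$ be finite groups, $X$ a finite $(H,G)$-biset with free left $H$-action, $\mathbb{K}$ a field, $M$ a left $\mathbb{K}G$-module and $N$ a left $\mathbb{K}H$-module. Then there is a $\mathbb{K}$-linear isomorphism $\mathrm{ad}: \mathrm{Hom}_{\mathbb{K}H}(\mathbb{K}X \otimes_{\mathbb{K}G} M, N) \to \mathrm{Hom}_{\mathbb{K}G}(M, \mathbb{K}X^* \otimes_{\mathbb{K}H} N)$, given by $f \mapsto f^\vee$ where $f^\vee(m) = \sum_{b \in L} b^* \otimes f(b \otimes m)$ and $L$ is a set of representatives of the left $H$-orbits of $X$. -/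
open TensorProduct

variable (K : Type*) [Field K] {H G X : Type*}

namespace BisetAdj

variable {K : Type*} [Field K] {X : Type*} [Fintype X] [DecidableEq X]
variable {M N P : Type*} [AddCommGroup M] [Module K M] [AddCommGroup N] [Module K N]
  [AddCommGroup P] [Module K P]

noncomputable def toLin (c : X → M →ₗ[K] N) : (X → K) ⊗[K] M →ₗ[K] N :=
  TensorProduct.lift <| LinearMap.mk₂ K (fun φ m => ∑ x : X, φ x • c x m)
    (by intro φ φ' m; simp [add_smul, Finset.sum_add_distrib])
    (by intro k φ m; simp [Finset.smul_sum, smul_smul])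
    (by intro φ m m'; simp [smul_add, Finset.sum_add_distrib])
    (by intro k φ m; simp [Finset.smul_sum, smul_comm k])

theorem toLin_single (c : X → M →ₗ[K] N) (x : X) (m : M) :
    toLin c (Pi.single x (1:K) ⊗ₜ[K] m) = c x m := by
  classical
  simp only [toLin, TensorProduct.lift.tmul, LinearMap.mk₂_apply]
  rw [Finset.sum_eq_single x]
  · simp
  · intro y _ hy; simp [Pi.single_apply, hy.symm]
  · simp

theorem ext_single (f g : (X → K) ⊗[K] M →ₗ[K] P)
    (h : ∀ x m, f (Pi.single x (1:K) ⊗ₜ[K] m) = g (Pi.single x (1:K) ⊗ₜ[K] m)) :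
    f = g := by
  apply TensorProduct.ext'
  intro φ m
  have hφ : φ = ∑ x : X, φ x • (Pi.single x (1:K) : X → K) := by
    funext y; simp [Pi.single_apply]
  rw [hφ]
  simp only [TensorProduct.sum_tmul, ← TensorProduct.smul_tmul', map_sum, map_smul, h]

end BisetAdj

set_option maxHeartbeats 2000000 in
/-- Let `X` be a finite `(H,G)`-biset (left `H`-action `l`, right
`G`-action `r`) with free left `H`-action, `L` a set of representatives of the left
`H`-orbits, `M` a left `KG`-module (representation `σ` of `G`) and `N` a left
`KH`-module (representation `ρ` of `H`).  Model
`KX ⊗_{KG} M` as `T1 := ((X → K) ⊗[K] M) ⧸ W1` (balancing `(x·g) ⊗ m ~ x ⊗ g·m`) and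
`KX* ⊗_{KH} N` as `T2 := ((X → K) ⊗[K] N) ⧸ W2` (first factor records the carrier of a
dual element; balancing `(x*·h) ⊗ n ~ x* ⊗ h·n`, i.e. `(hx)* ⊗ h·n ~ x* ⊗ n`), with the
left `G`-action `a` on `T2` determined by `g • (x* ⊗ n) = (x g⁻¹)* ⊗ n`.  Then there is
a `K`-linear isomorphism
`ad : Hom_{KH}(KX ⊗_{KG} M, N) ≃ Hom_{KG}(M, KX* ⊗_{KH} N)` given by
`f ↦ f^∨`, `f^∨(m) = ∑_{b ∈ L} b* ⊗ f(b ⊗ m)`. -/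
theorem biset_adjunction
    [Group H] [Group G] [Fintype H] [Finite G] [Fintype X] [DecidableEq X]
    (l : H → X → X) (r : X → G → X)
    (hl1 : ∀ x, l 1 x = x) (hlm : ∀ g h x, l (g * h) x = l g (l h x))
    (hr1 : ∀ x, r x 1 = x) (hrm : ∀ x g h, r x (g * h) = r (r x g) h)
    (hc : ∀ h x g, r (l h x) g = l h (r x g))
    (hfree : ∀ x h, l h x = x → h = 1)
    (L : Finset X) (hL : ∀ x : X, ∃! b, b ∈ L ∧ ∃ h, x = l h b)
    (M : Type*) [AddCommGroup M] [Module K M]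
    (σ : G → M →ₗ[K] M)
    (hσ1 : σ 1 = LinearMap.id) (hσm : ∀ g g', σ (g * g') = σ g ∘ₗ σ g')
    (N : Type*) [AddCommGroup N] [Module K N]
    (ρ : H → N →ₗ[K] N)
    (hρ1 : ρ 1 = LinearMap.id) (hρm : ∀ h h', ρ (h * h') = ρ h ∘ₗ ρ h')
    (W1 : Submodule K ((X → K) ⊗[K] M))
    (hW1 : W1 = Submodule.span K
      {w | ∃ (x : X) (g : G) (m : M),
        w = Pi.single (r x g) (1 : K) ⊗ₜ[K] m - Pi.single x (1 : K) ⊗ₜ[K] (σ g m)})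
    (W2 : Submodule K ((X → K) ⊗[K] N))
    (hW2 : W2 = Submodule.span K
      {w | ∃ (h : H) (x : X) (n : N),
        w = Pi.single (l h x) (1 : K) ⊗ₜ[K] (ρ h n) - Pi.single x (1 : K) ⊗ₜ[K] n})
    -- the left `G`-action on `T2 = KX* ⊗_{KH} N`
    (a : G → (((X → K) ⊗[K] N) ⧸ W2) →ₗ[K] (((X → K) ⊗[K] N) ⧸ W2))
    (ha : ∀ (g : G) (x : X) (n : N),
      a g (Submodule.Quotient.mk (Pi.single x (1 : K) ⊗ₜ[K] n))
        = Submodule.Quotient.mk (Pi.single (r x g⁻¹) (1 : K) ⊗ₜ[K] n))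
    -- the two equivariant-hom spaces
    (Dom : Submodule K ((((X → K) ⊗[K] M) ⧸ W1) →ₗ[K] N))
    (hDom : ∀ f, f ∈ Dom ↔ ∀ (h : H) (x : X) (m : M),
      f (Submodule.Quotient.mk (Pi.single (l h x) (1 : K) ⊗ₜ[K] m))
        = ρ h (f (Submodule.Quotient.mk (Pi.single x (1 : K) ⊗ₜ[K] m))))
    (Cod : Submodule K (M →ₗ[K] (((X → K) ⊗[K] N) ⧸ W2)))
    (hCod : ∀ F, F ∈ Cod ↔ ∀ (g : G) (m : M), F (σ g m) = a g (F m)) :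
    ∃ e : ↥Dom ≃ₗ[K] ↥Cod,
      ∀ (f : ↥Dom) (m : M),
        ((e f : M →ₗ[K] (((X → K) ⊗[K] N) ⧸ W2))) m
          = Submodule.Quotient.mk
              (∑ b ∈ L, Pi.single b (1 : K) ⊗ₜ[K]
                (f : (((X → K) ⊗[K] M) ⧸ W1) →ₗ[K] N)
                  (Submodule.Quotient.mk (Pi.single b (1 : K) ⊗ₜ[K] m))) := by
  classical
  choose β hβmem η hη using fun x => (hL x).exists
  -- group action facts
  have linv : ∀ (h : H) x, l h⁻¹ (l h x) = x := by
    intro h x; rw [← hlm, inv_mul_cancel, hl1]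
  have huniq : ∀ (x b : X) (h : H), b ∈ L → x = l h b → b = β x ∧ h = η x := by
    intro x b h hb hx
    have hb' : b = β x :=
      ExistsUnique.unique (hL x) ⟨hb, h, hx⟩ ⟨hβmem x, η x, hη x⟩
    subst hb'
    refine ⟨rfl, ?_⟩
    have e2 : l (η x)⁻¹ x = β x := by
      have e2 := linv (η x) (β x); rw [← hη x] at e2; exact e2
    have e1 : l ((η x)⁻¹ * h) (β x) = β x := by
      rw [hlm, ← hx]; exact e2
    have e3 := hfree _ _ e1
    exact (inv_mul_eq_one.mp e3).symm
  have hβL : ∀ b ∈ L, β b = b ∧ η b = (1 : H) := by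
    intro b hb
    obtain ⟨h1, h2⟩ := huniq b b 1 hb (hl1 b).symm
    exact ⟨h1.symm, h2.symm⟩
  have hβl : ∀ (h : H) (x : X), β (l h x) = β x ∧ η (l h x) = h * η x := by
    intro h x
    obtain ⟨h1, h2⟩ := huniq (l h x) (β x) (h * η x) (hβmem x)
      (by rw [hlm, ← hη x])
    exact ⟨h1.symm, h2.symm⟩
  have hβr : ∀ (x : X) (g : G),
      β (r x g) = β (r (β x) g) ∧ η (r x g) = η x * η (r (β x) g) := by
    intro x g
    have hx : r x g = l (η x) (r (β x) g) := by rw [← hc, ← hη x]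
    rw [hx]; exact hβl (η x) (r (β x) g)
  have hinv : ∀ b ∈ L, ∀ g : G,
      β (r (β (r b g)) g⁻¹) = b ∧ η (r (β (r b g)) g⁻¹) = (η (r b g))⁻¹ := by
    intro b hb g
    have e : l (η (r b g))⁻¹ (r b g) = β (r b g) := by
      have e := linv (η (r b g)) (β (r b g)); rw [← hη (r b g)] at e; exact e
    have key : r (β (r b g)) g⁻¹ = l (η (r b g))⁻¹ b := by
      rw [← e, hc, ← hrm, mul_inv_cancel, hr1]
    obtain ⟨h1, h2⟩ := huniq (r (β (r b g)) g⁻¹) b (η (r b g))⁻¹ hb key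
    exact ⟨h1.symm, h2.symm⟩
  have hρmul : ∀ (h h' : H) (n : N), ρ h (ρ h' n) = ρ (h * h') n := by
    intro h h' n; rw [hρm]; rfl
  -- quotient relations
  have hT1rel : ∀ (x : X) (g : G) (m : M),
      (Submodule.Quotient.mk (Pi.single (r x g) (1 : K) ⊗ₜ[K] m) : _ ⧸ W1)
        = Submodule.Quotient.mk (Pi.single x (1 : K) ⊗ₜ[K] (σ g m)) := by
    intro x g m
    rw [Submodule.Quotient.eq, hW1]
    exact Submodule.subset_span ⟨x, g, m, rfl⟩
  have hT2rel : ∀ (h : H) (x : X) (n : N),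
      (Submodule.Quotient.mk (Pi.single (l h x) (1 : K) ⊗ₜ[K] (ρ h n)) : _ ⧸ W2)
        = Submodule.Quotient.mk (Pi.single x (1 : K) ⊗ₜ[K] n) := by
    intro h x n
    rw [Submodule.Quotient.eq, hW2]
    exact Submodule.subset_span ⟨h, x, n, rfl⟩
  have hT2norm : ∀ (x : X) (n : N),
      (Submodule.Quotient.mk (Pi.single x (1 : K) ⊗ₜ[K] n) : _ ⧸ W2)
        = Submodule.Quotient.mk (Pi.single (β x) (1 : K) ⊗ₜ[K] (ρ (η x)⁻¹ n)) := by
    intro x n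
    have h2 := hT2rel (η x) (β x) (ρ (η x)⁻¹ n)
    rw [← hη x, hρmul, mul_inv_cancel, hρ1] at h2
    simpa using h2
  -- the component maps Φ b0 : T2 →ₗ N
  have pfΦ : ∀ b0 : X, W2 ≤ LinearMap.ker
      (BisetAdj.toLin (fun x => if β x = b0 then ρ (η x)⁻¹ else (0 : N →ₗ[K] N))) := by
    intro b0
    rw [hW2, Submodule.span_le]
    rintro w ⟨h, x, n, rfl⟩
    simp only [SetLike.mem_coe, LinearMap.mem_ker, map_sub, BisetAdj.toLin_single]
    rw [(hβl h x).1, (hβl h x).2]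
    split_ifs with hx
    · rw [sub_eq_zero]
      show ρ (h * η x)⁻¹ (ρ h n) = ρ (η x)⁻¹ n
      rw [hρmul]
      congr 1
      group
    · simp
  obtain ⟨Φ, hΦ⟩ : ∃ Φ : X → ((((X → K) ⊗[K] N) ⧸ W2) →ₗ[K] N),
      ∀ (b0 x : X) (n : N),
        Φ b0 (Submodule.Quotient.mk (Pi.single x (1 : K) ⊗ₜ[K] n))
          = if β x = b0 then ρ (η x)⁻¹ n else 0 := by
    refine ⟨fun b0 => Submodule.liftQ W2 _ (pfΦ b0), fun b0 x n => ?_⟩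
    rw [Submodule.liftQ_apply, BisetAdj.toLin_single]
    split_ifs <;> simp
  have mkSum2 : ∀ (s : Finset X) (v : X → (X → K) ⊗[K] N),
      (Submodule.Quotient.mk (∑ b ∈ s, v b) : _ ⧸ W2)
        = ∑ b ∈ s, Submodule.Quotient.mk (v b) := by
    intro s v; rw [← Submodule.mkQ_apply, map_sum]; rfl
  -- recomposition
  have hS : ∀ t : ((X → K) ⊗[K] N) ⧸ W2,
      (∑ b ∈ L, Submodule.Quotient.mk (Pi.single b (1 : K) ⊗ₜ[K] (Φ b t)) : _ ⧸ W2)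
        = t := by
    have heq : (∑ b ∈ L, W2.mkQ ∘ₗ TensorProduct.mk K (X → K) N (Pi.single b (1 : K)) ∘ₗ Φ b)
        = (LinearMap.id : (((X → K) ⊗[K] N) ⧸ W2) →ₗ[K] _) := by
      apply Submodule.linearMap_qext
      apply BisetAdj.ext_single
      intro x n
      simp only [LinearMap.comp_apply, LinearMap.sum_apply, Submodule.mkQ_apply,
        LinearMap.id_apply, TensorProduct.mk_apply]
      have hterm : ∀ b ∈ L,
          (Submodule.Quotient.mk (Pi.single b (1 : K) ⊗ₜ[K]
            (Φ b (Submodule.Quotient.mk (Pi.single x (1 : K) ⊗ₜ[K] n)))) : _ ⧸ W2)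
          = if β x = b then
              Submodule.Quotient.mk (Pi.single b (1 : K) ⊗ₜ[K] (ρ (η x)⁻¹ n)) else 0 := by
        intro b _
        rw [hΦ]
        split_ifs <;> simp
      rw [Finset.sum_congr rfl hterm, Finset.sum_ite_eq, if_pos (hβmem x)]
      exact (hT2norm x n).symm
    intro t
    have := LinearMap.congr_fun heq t
    simpa only [LinearMap.sum_apply, LinearMap.comp_apply, TensorProduct.mk_apply,
      Submodule.mkQ_apply, LinearMap.id_apply] using this
  -- equivariance of Φ
  have hΦa : ∀ (g : G), ∀ b0 ∈ L, ∀ t,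
      Φ b0 (a g t) = ρ (η (r b0 g)) (Φ (β (r b0 g)) t) := by
    intro g b0 hb0
    suffices h : (Φ b0) ∘ₗ (a g) = (ρ (η (r b0 g))) ∘ₗ (Φ (β (r b0 g))) by
      intro t
      exact LinearMap.congr_fun h t
    apply Submodule.linearMap_qext
    apply BisetAdj.ext_single
    intro x n
    simp only [LinearMap.comp_apply, Submodule.mkQ_apply]
    rw [ha g x n, hΦ, hΦ]
    obtain ⟨hc1, hc2⟩ := hinv b0 hb0 g
    by_cases hx : β x = β (r b0 g)
    · rw [if_pos hx]
      have h1 : β (r x g⁻¹) = b0 := by rw [(hβr x g⁻¹).1, hx, hc1]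
      rw [if_pos h1, (hβr x g⁻¹).2, hx, hc2, mul_inv_rev, inv_inv, hρmul]
    · rw [if_neg hx]
      have h1 : β (r x g⁻¹) ≠ b0 := by
        intro hcon
        apply hx
        have h2 := (hinv (β x) (hβmem x) g⁻¹).1
        rw [inv_inv] at h2
        rw [(hβr x g⁻¹).1] at hcon
        rw [hcon] at h2
        exact h2.symm
      rw [if_neg h1, map_zero]
  -- the forward map
  obtain ⟨Fwd0, hFwd0⟩ : ∃ Fwd0 : ((((X → K) ⊗[K] M) ⧸ W1) →ₗ[K] N) →ₗ[K]
        (M →ₗ[K] (((X → K) ⊗[K] N) ⧸ W2)),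
      ∀ f m, Fwd0 f m = ∑ b ∈ L, Submodule.Quotient.mk (Pi.single b (1 : K) ⊗ₜ[K]
        f (Submodule.Quotient.mk (Pi.single b (1 : K) ⊗ₜ[K] m))) := by
    refine ⟨∑ b ∈ L,
      (LinearMap.llcomp K M N (((X → K) ⊗[K] N) ⧸ W2)
        (W2.mkQ ∘ₗ TensorProduct.mk K (X → K) N (Pi.single b (1 : K)))) ∘ₗ
      (LinearMap.lcomp K N
        (W1.mkQ ∘ₗ TensorProduct.mk K (X → K) M (Pi.single b (1 : K)))), ?_⟩
    intro f m
    simp only [LinearMap.sum_apply, LinearMap.comp_apply, LinearMap.llcomp_apply,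
      LinearMap.lcomp_apply, TensorProduct.mk_apply, Submodule.mkQ_apply]
  -- Fwd0 f is G-equivariant when f is H-equivariant
  have hFwdmem : ∀ f, f ∈ Dom → Fwd0 f ∈ Cod := by
    intro f hf
    rw [hCod]
    intro g m
    have lhs_eq : Fwd0 f (σ g m) = ∑ b ∈ L, Submodule.Quotient.mk
        (Pi.single b (1 : K) ⊗ₜ[K] (ρ (η (r b g))
          (f (Submodule.Quotient.mk (Pi.single (β (r b g)) (1 : K) ⊗ₜ[K] m))))) := by
      rw [hFwd0]
      refine Finset.sum_congr rfl fun b _ => ?_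
      congr 2
      rw [← hT1rel b g m]
      conv_lhs => rw [hη (r b g)]
      exact (hDom f).mp hf _ _ _
    have rhs_eq : a g (Fwd0 f m) = ∑ b ∈ L, Submodule.Quotient.mk
        (Pi.single (β (r b g⁻¹)) (1 : K) ⊗ₜ[K] (ρ (η (r b g⁻¹))⁻¹
          (f (Submodule.Quotient.mk (Pi.single b (1 : K) ⊗ₜ[K] m))))) := by
      rw [hFwd0, map_sum]
      refine Finset.sum_congr rfl fun b _ => ?_
      rw [ha, hT2norm]
    rw [lhs_eq, rhs_eq]
    refine Finset.sum_bij' (fun b _ => β (r b g)) (fun c _ => β (r c g⁻¹))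
      (fun b _ => hβmem _) (fun c _ => hβmem _) ?_ ?_ ?_
    · intro b hb
      exact (hinv b hb g).1
    · intro c hcL
      have := (hinv c hcL g⁻¹).1
      rwa [inv_inv] at this
    · intro b hb
      obtain ⟨h1, h2⟩ := hinv b hb g
      rw [h1, h2, inv_inv]
  -- the backward map
  have pfW1 : ∀ F : M →ₗ[K] (((X → K) ⊗[K] N) ⧸ W2), F ∈ Cod →
      W1 ≤ LinearMap.ker (BisetAdj.toLin (fun x => ρ (η x) ∘ₗ Φ (β x) ∘ₗ F)) := by
    intro F hF
    rw [hW1, Submodule.span_le]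
    rintro w ⟨x, g, m, rfl⟩
    simp only [SetLike.mem_coe, LinearMap.mem_ker, map_sub, BisetAdj.toLin_single,
      LinearMap.comp_apply]
    rw [(hCod F).mp hF g m, hΦa g (β x) (hβmem x) (F m), hρmul,
      (hβr x g).1, (hβr x g).2, sub_self]
  obtain ⟨Bwd0, hBwd0⟩ : ∃ Bwd0 : ↥Cod → ((((X → K) ⊗[K] M) ⧸ W1) →ₗ[K] N),
      ∀ (F : ↥Cod) (x : X) (m : M),
        Bwd0 F (Submodule.Quotient.mk (Pi.single x (1 : K) ⊗ₜ[K] m))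
          = ρ (η x) (Φ (β x) (F.1 m)) := by
    refine ⟨fun F => Submodule.liftQ W1 _ (pfW1 F.1 F.2), fun F x m => ?_⟩
    rw [Submodule.liftQ_apply, BisetAdj.toLin_single]
    rfl
  have hBwdmem : ∀ F : ↥Cod, Bwd0 F ∈ Dom := by
    intro F
    rw [hDom]
    intro h x m
    rw [hBwd0, hBwd0, (hβl h x).1, (hβl h x).2, ← hρmul]
  -- the two maps are mutually inverse
  have hleft : ∀ f : ↥Dom, ∀ hmem, Bwd0 ⟨Fwd0 f.1, hmem⟩ = f.1 := by
    intro f hmem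
    apply Submodule.linearMap_qext
    apply BisetAdj.ext_single
    intro x m
    simp only [LinearMap.comp_apply, Submodule.mkQ_apply]
    rw [hBwd0]
    show ρ (η x) (Φ (β x) (Fwd0 f.1 m)) = _
    rw [hFwd0, map_sum]
    have hterm : ∀ b ∈ L,
        Φ (β x) (Submodule.Quotient.mk (Pi.single b (1 : K) ⊗ₜ[K]
          (f.1 (Submodule.Quotient.mk (Pi.single b (1 : K) ⊗ₜ[K] m)))))
        = if b = β x then
            f.1 (Submodule.Quotient.mk (Pi.single b (1 : K) ⊗ₜ[K] m)) else 0 := by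
      intro b hb
      rw [hΦ, (hβL b hb).1, (hβL b hb).2]
      split_ifs <;> simp [hρ1]
    rw [Finset.sum_congr rfl hterm, Finset.sum_ite_eq', if_pos (hβmem x)]
    conv_rhs => rw [hη x]
    exact ((hDom f.1).mp f.2 _ _ _).symm
  have hright : ∀ F : ↥Cod, Fwd0 (Bwd0 F) = F.1 := by
    intro F
    apply LinearMap.ext
    intro m
    rw [hFwd0]
    have hterm : ∀ b ∈ L,
        (Submodule.Quotient.mk (Pi.single b (1 : K) ⊗ₜ[K]
          (Bwd0 F (Submodule.Quotient.mk (Pi.single b (1 : K) ⊗ₜ[K] m)))) : _ ⧸ W2)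
        = Submodule.Quotient.mk (Pi.single b (1 : K) ⊗ₜ[K] (Φ b (F.1 m))) := by
      intro b hb
      rw [hBwd0, (hβL b hb).1, (hβL b hb).2]
      simp [hρ1]
    rw [Finset.sum_congr rfl hterm, hS]
  -- assemble the equivalence
  refine ⟨{ toFun := fun f => ⟨Fwd0 f.1, hFwdmem f.1 f.2⟩
            map_add' := by
              intro f g
              apply Subtype.ext
              simp only [Submodule.coe_add, map_add]
            map_smul' := by
              intro k f
              apply Subtype.ext
              simp only [Submodule.coe_smul, map_smul, RingHom.id_apply]
            invFun := fun F => ⟨Bwd0 F, hBwdmem F⟩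
            left_inv := by
              intro f
              apply Subtype.ext
              exact hleft f _
            right_inv := by
              intro F
              apply Subtype.ext
              exact hright F }, ?_⟩
  intro f m
  show Fwd0 f.1 m = _
  rw [hFwd0, mkSum2]
end

section
/- Let $(Q,X)$ be a finite acyclic EI quiver and $\mathcal{C} = \mathcal{C}(Q,X)$ the associated finite EI category. Then the category $\mathrm{rep}(Q,X)$ of representations of $(Q,X)$ is equivalent to the category $\mathbb{K}\mathcal{C}\text{-mod}$ of finite-dimensional left modules over the category algebra $\mathbb{K}\mathcal{C}$. -/
/-- A finite EI quiver `(Q,X)`: a finite quiver `(Q0, Q1, s, t)` together with a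
finite group `G i = X(i)` at each vertex `i` and a finite nonempty
`(G (t a), G (s a))`-biset `B a = X(a)` (left action `l`, right action `r`) at each
arrow `a`. -/
structure EIData where
  Q0 : Type
  Q1 : Type
  [fin0 : Fintype Q0]
  [dec0 : DecidableEq Q0]
  [fin1 : Fintype Q1]
  [dec1 : DecidableEq Q1]
  s : Q1 → Q0
  t : Q1 → Q0
  G : Q0 → Type
  [grp : ∀ i, Group (G i)]
  [finG : ∀ i, Fintype (G i)]
  [decG : ∀ i, DecidableEq (G i)]
  B : Q1 → Type
  [finB : ∀ a, Fintype (B a)]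
  [decB : ∀ a, DecidableEq (B a)]
  [neB : ∀ a, Nonempty (B a)]
  l : ∀ a, G (t a) → B a → B a
  r : ∀ a, B a → G (s a) → B a
  l_one : ∀ a b, l a 1 b = b
  l_mul : ∀ a g h b, l a (g * h) b = l a g (l a h b)
  r_one : ∀ a b, r a b 1 = b
  r_mul : ∀ a b g h, r a b (g * h) = r a (r a b g) h
  lr : ∀ a g b h, r a (l a g b) h = l a g (r a b h)

attribute [instance] EIData.fin0 EIData.dec0 EIData.fin1 EIData.dec1 EIData.grp
  EIData.finG EIData.decG EIData.finB EIData.decB EIData.neB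

namespace EIData

/-- The EI quiver is acyclic: the quiver has no nontrivial oriented cycle. -/
def Acyclic (D : EIData) : Prop :=
  ∀ i : D.Q0, ¬ Relation.TransGen (fun i j => ∃ a, D.s a = i ∧ D.t a = j) i i

/-- The assignment `X` is action-free: the left and right actions on each biset
`X(a)` are free. -/
def ActionFree (D : EIData) : Prop :=
  (∀ a g (b : D.B a), D.l a g b = b → g = 1) ∧
  (∀ a (b : D.B a) g, D.r a b g = b → g = 1)

/-- Generators of the category algebra `K𝒞(Q,X)`: the morphisms `g ∈ G i = X(i)`
(in particular the identities `e_i`), and the morphisms `b ∈ B a = X(a)`. -/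
def Gen (D : EIData) : Type := (Σ i : D.Q0, D.G i) ⊕ (Σ a : D.Q1, D.B a)

/-- The defining relations of the category algebra `K𝒞(Q,X)` of the finite EI
category `𝒞(Q,X)` associated to a finite EI quiver: by [CW, Proposition 2.2],
`K𝒞(Q,X)` is the tensor algebra of `V = ⊕_{a} KX(a)` over `A = ∏_i KX(i)`, i.e. the
algebra generated by the elements of the groups `X(i)` and of the bisets `X(a)`
subject to: group multiplication in each `X(i)`, orthogonality of distinct vertices,
`∑_i e_i = 1`, and the biset bimodule relations. -/
inductive CatRel (K : Type) [Field K] (D : EIData) :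
    FreeAlgebra K D.Gen → FreeAlgebra K D.Gen → Prop
  | grp_mul (i : D.Q0) (g h : D.G i) :
      CatRel K D
        (FreeAlgebra.ι K (Sum.inl ⟨i, g⟩) * FreeAlgebra.ι K (Sum.inl ⟨i, h⟩))
        (FreeAlgebra.ι K (Sum.inl ⟨i, g * h⟩))
  | grp_orth (i j : D.Q0) (g : D.G i) (h : D.G j) (hij : i ≠ j) :
      CatRel K D
        (FreeAlgebra.ι K (Sum.inl ⟨i, g⟩) * FreeAlgebra.ι K (Sum.inl ⟨j, h⟩)) 0
  | unit :
      CatRel K D (∑ i : D.Q0, FreeAlgebra.ι K (Sum.inl ⟨i, (1 : D.G i)⟩)) 1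
  | left_act (a : D.Q1) (g : D.G (D.t a)) (b : D.B a) :
      CatRel K D
        (FreeAlgebra.ι K (Sum.inl ⟨D.t a, g⟩) * FreeAlgebra.ι K (Sum.inr ⟨a, b⟩))
        (FreeAlgebra.ι K (Sum.inr ⟨a, D.l a g b⟩))
  | right_act (a : D.Q1) (b : D.B a) (g : D.G (D.s a)) :
      CatRel K D
        (FreeAlgebra.ι K (Sum.inr ⟨a, b⟩) * FreeAlgebra.ι K (Sum.inl ⟨D.s a, g⟩))
        (FreeAlgebra.ι K (Sum.inr ⟨a, D.r a b g⟩))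
  | left_orth (j : D.Q0) (g : D.G j) (a : D.Q1) (b : D.B a) (h : j ≠ D.t a) :
      CatRel K D
        (FreeAlgebra.ι K (Sum.inl ⟨j, g⟩) * FreeAlgebra.ι K (Sum.inr ⟨a, b⟩)) 0
  | right_orth (a : D.Q1) (b : D.B a) (j : D.Q0) (g : D.G j) (h : j ≠ D.s a) :
      CatRel K D
        (FreeAlgebra.ι K (Sum.inr ⟨a, b⟩) * FreeAlgebra.ι K (Sum.inl ⟨j, g⟩)) 0

/-- The category algebra `K𝒞(Q,X)` of the finite EI category associated to the
finite EI quiver `(Q,X)`. -/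
def CatAlg (K : Type) [Field K] (D : EIData) : Type := RingQuot (CatRel K D)

noncomputable instance (K : Type) [Field K] (D : EIData) : Ring (CatAlg K D) :=
  inferInstanceAs (Ring (RingQuot (CatRel K D)))

noncomputable instance (K : Type) [Field K] (D : EIData) : Algebra K (CatAlg K D) :=
  inferInstanceAs (Algebra K (RingQuot (CatRel K D)))

/-- The image in the category algebra of a generator (a group element or a biset
element). -/
noncomputable def gen (K : Type) [Field K] (D : EIData) (x : D.Gen) : CatAlg K D :=
  RingQuot.mkAlgHom K (CatRel K D) (FreeAlgebra.ι K x)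

/-- The idempotent `e_i` of the category algebra at a vertex `i`. -/
noncomputable def idem (K : Type) [Field K] (D : EIData) (i : D.Q0) : CatAlg K D :=
  gen K D (Sum.inl ⟨i, (1 : D.G i)⟩)

/-- The double of a finite EI quiver: adjoin a reversed arrow `a* : t a → s a` for
each arrow `a`, with biset `X(a*) = X(a)*` the dual biset. -/
def double (D : EIData) : EIData where
  Q0 := D.Q0
  Q1 := D.Q1 ⊕ D.Q1
  fin0 := D.fin0
  dec0 := D.dec0
  fin1 := inferInstance
  dec1 := inferInstance
  grp := D.grp
  finG := D.finG
  decG := D.decG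
  finB := fun a => match a with
    | .inl a => D.finB a
    | .inr a => D.finB a
  decB := fun a => match a with
    | .inl a => D.decB a
    | .inr a => D.decB a
  neB := fun a => match a with
    | .inl a => D.neB a
    | .inr a => D.neB a
  s := Sum.elim D.s D.t
  t := Sum.elim D.t D.s
  G := D.G
  B := fun a => match a with
    | .inl a => D.B a
    | .inr a => D.B a
  l := fun a => match a with
    | .inl a => D.l a
    | .inr a => fun g b => D.r a b g⁻¹
  r := fun a => match a with
    | .inl a => D.r a
    | .inr a => fun b g => D.l a g⁻¹ b
  l_one := by
    rintro (a | a) b <;> first | exact D.l_one a b | exact (congrArg (D.r a b) inv_one).trans (D.r_one a b) | simp [D.l_one, D.r_one]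
  l_mul := by
    rintro (a | a) g h b <;> first | exact D.l_mul a g h b | exact (congrArg (D.r a b) (mul_inv_rev g h)).trans (D.r_mul a b h⁻¹ g⁻¹) | simp [D.l_mul, D.r_mul, mul_inv_rev]
  r_one := by
    rintro (a | a) b <;> first | exact D.r_one a b | exact (congrArg (fun x => D.l a x b) inv_one).trans (D.l_one a b) | simp [D.r_one, D.l_one]
  r_mul := by
    rintro (a | a) b g h <;> first | exact D.r_mul a b g h | exact (congrArg (fun x => D.l a x b) (mul_inv_rev g h)).trans (D.l_mul a h⁻¹ g⁻¹ b) | simp [D.r_mul, D.l_mul, mul_inv_rev]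
  lr := by
    rintro (a | a) g b h <;> first | exact D.lr a g b h | exact (D.lr a h⁻¹ b g⁻¹).symm | simp [D.lr]

/-- The preprojective relation `ρ = ∑_{a ∈ Q₁} (∑_{b ∈ R a} b b* - ∑_{c ∈ L a} c* c)`
in the category algebra of the doubled EI quiver, for chosen representative sets
`R a` (of right orbits) and `L a` (of left orbits) of each biset `X(a)`. -/
noncomputable def prho (K : Type) [Field K] (D : EIData)
    (R L : ∀ a : D.Q1, Finset (D.B a)) : CatAlg K D.double :=
  ∑ a : D.Q1,
    ((∑ b ∈ R a, gen K D.double (Sum.inr ⟨Sum.inl a, b⟩) *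
        gen K D.double (Sum.inr ⟨Sum.inr a, b⟩))
      - ∑ c ∈ L a, gen K D.double (Sum.inr ⟨Sum.inr a, c⟩) *
        gen K D.double (Sum.inr ⟨Sum.inl a, c⟩))

/-- The relation presenting `Π(Q,X)` as the quotient of `K𝒞(双Q,双X)` by the
two-sided ideal generated by `ρ`. -/
def prerel (K : Type) [Field K] (D : EIData) (R L : ∀ a : D.Q1, Finset (D.B a)) :
    CatAlg K D.double → CatAlg K D.double → Prop :=
  fun u v => v = 0 ∧ u = prho K D R L

/-- The preprojective algebra `Π(Q,X)` of a finite EI quiver. -/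
def PiAlg (K : Type) [Field K] (D : EIData) (R L : ∀ a : D.Q1, Finset (D.B a)) :
    Type :=
  RingQuot (prerel K D R L)

noncomputable instance (K : Type) [Field K] (D : EIData)
    (R L : ∀ a : D.Q1, Finset (D.B a)) : Ring (PiAlg K D R L) :=
  inferInstanceAs (Ring (RingQuot (prerel K D R L)))

noncomputable instance (K : Type) [Field K] (D : EIData)
    (R L : ∀ a : D.Q1, Finset (D.B a)) : Algebra K (PiAlg K D R L) :=
  inferInstanceAs (Algebra K (RingQuot (prerel K D R L)))

/-- `R` is a set of representatives of the right `X(s a)`-orbits of `X(a)`, and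
`L` a set of representatives of the left `X(t a)`-orbits. -/
def IsRepSets (D : EIData) (R L : ∀ a : D.Q1, Finset (D.B a)) : Prop :=
  (∀ (a : D.Q1) (x : D.B a), ∃! b, b ∈ R a ∧ ∃ g, x = D.r a b g) ∧
  (∀ (a : D.Q1) (x : D.B a), ∃! c, c ∈ L a ∧ ∃ g, x = D.l a g c)

end EIData

open CategoryTheory

variable (K : Type) [Field K] (D : EIData)

/-- A representation `M = (M_i, M_a)` of a finite EI quiver `(Q,X)`: a
finite-dimensional `KX(i)`-module `M_i` for each vertex `i` and, for each arrow `a`,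
a `KX(t a)`-linear map `M_a : KX(a) ⊗_{KX(s a)} M_{s a} → M_{t a}`, encoded as the
`K`-bilinear balanced map `(b, m) ↦ M_a (b ⊗ m)`. -/
structure EIRep where
  M : ∀ i : D.Q0, Type
  [acg : ∀ i, AddCommGroup (M i)]
  [modK : ∀ i, Module K (M i)]
  [modA : ∀ i, Module (MonoidAlgebra K (D.G i)) (M i)]
  [tower : ∀ i, IsScalarTower K (MonoidAlgebra K (D.G i)) (M i)]
  [findim : ∀ i, Module.Finite K (M i)]
  act : ∀ a : D.Q1, D.B a → M (D.s a) →ₗ[K] M (D.t a)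
  act_r : ∀ (a : D.Q1) (b : D.B a) (g : D.G (D.s a)) (m : M (D.s a)),
    act a (D.r a b g) m
      = act a b ((MonoidAlgebra.single g (1 : K) : MonoidAlgebra K (D.G (D.s a))) • m)
  act_l : ∀ (a : D.Q1) (g : D.G (D.t a)) (b : D.B a) (m : M (D.s a)),
    act a (D.l a g b) m
      = (MonoidAlgebra.single g (1 : K) : MonoidAlgebra K (D.G (D.t a))) • act a b m

attribute [instance] EIRep.acg EIRep.modK EIRep.modA EIRep.tower EIRep.findim

/-- Morphisms of representations of a finite EI quiver. -/
@[ext]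
structure EIRepHom (M N : EIRep K D) where
  f : ∀ i : D.Q0, M.M i →ₗ[MonoidAlgebra K (D.G i)] N.M i
  comm : ∀ (a : D.Q1) (b : D.B a) (m : M.M (D.s a)),
    f (D.t a) (M.act a b m) = N.act a b (f (D.s a) m)

/-- The category `rep(Q,X)` of representations of a finite EI quiver. -/
noncomputable instance : Category (EIRep K D) where
  Hom M N := EIRepHom K D M N
  id M := ⟨fun _ => LinearMap.id, fun _ _ _ => rfl⟩
  comp {M N O} f g := ⟨fun i => (g.f i).comp (f.f i), by
    intro a b m
    simp only [LinearMap.comp_apply, f.comm, g.comm]⟩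
  id_comp f := EIRepHom.ext (funext fun i => LinearMap.comp_id (f.f i))
  comp_id f := EIRepHom.ext (funext fun i => LinearMap.id_comp (f.f i))
  assoc f g h := EIRepHom.ext (funext fun i => rfl)

/-- The category of finite-dimensional left modules over the category algebra
`K𝒞(Q,X)`. -/
noncomputable def ModFin :=
  CategoryTheory.ObjectProperty.FullSubcategory
    (fun M : ModuleCat (EIData.CatAlg K D) =>
      Module.Finite K (RestrictScalars K (EIData.CatAlg K D) M))

noncomputable instance : Category (ModFin K D) :=
  inferInstanceAs (Category (CategoryTheory.ObjectProperty.FullSubcategory _))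


/-!
`K𝒞` is presented by generators and relations in which the identities `e_i` of the groups
`X(i)` form a complete family of orthogonal idempotents. A representation `M` becomes the
`K𝒞`-module `⊕ᵢ Mᵢ`, on which group elements act on their own summand and biset elements
through the structure maps; conversely a `K𝒞`-module `V` gives the representation
`i ↦ e_i V`, with the actions of the generators restricted to these corners. The two
constructions are mutually inverse: `Mᵢ ≅ e_i (⊕ⱼ Mⱼ)` through the inclusion of the
summand, and `⊕ᵢ e_i V ≅ V` through summation, because `∑ᵢ e_i = 1`.
-/

noncomputable section

def RestrictScalars.linearEquiv (R S M : Type*) [CommSemiring R] [Semiring S] [Algebra R S]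
    [AddCommMonoid M] [Module R M] [Module S M] [IsScalarTower R S M] :
    RestrictScalars R S M ≃ₗ[R] M where
  __ := RestrictScalars.addEquiv R S M
  map_smul' c x := algebraMap_smul S c (RestrictScalars.addEquiv R S M x)

theorem Module.Finite.restrictScalars_of_linearEquiv (R : Type*) {S X Y : Type*}
    [CommSemiring R] [Semiring S] [Algebra R S] [AddCommMonoid X] [Module S X]
    [AddCommMonoid Y] [Module S Y] (e : X ≃ₗ[S] Y)
    (h : Module.Finite R (RestrictScalars R S X)) : Module.Finite R (RestrictScalars R S Y) :=
  Module.Finite.equiv (M := RestrictScalars R S X)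
    { e.toAddEquiv with map_smul' := fun c x => e.map_smul (algebraMap R S c) x }

namespace EIData

variable {K D}

section Relations

theorem gen_mul_gen_of_catRel {x y : D.Gen} {z : FreeAlgebra K D.Gen}
    (h : CatRel K D (FreeAlgebra.ι K x * FreeAlgebra.ι K y) z) :
    gen K D x * gen K D y = RingQuot.mkAlgHom K (CatRel K D) z :=
  (map_mul (RingQuot.mkAlgHom K (CatRel K D)) _ _).symm.trans (RingQuot.mkAlgHom_rel K h)

variable (K D)

theorem gen_inl_mul_gen_inl (i : D.Q0) (g h : D.G i) :
    gen K D (.inl ⟨i, g⟩) * gen K D (.inl ⟨i, h⟩) = gen K D (.inl ⟨i, g * h⟩) :=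
  gen_mul_gen_of_catRel (.grp_mul i g h)

theorem gen_inl_mul_gen_inl_of_ne {i j : D.Q0} (g : D.G i) (h : D.G j) (hij : i ≠ j) :
    gen K D (.inl ⟨i, g⟩) * gen K D (.inl ⟨j, h⟩) = 0 :=
  (gen_mul_gen_of_catRel (.grp_orth i j g h hij)).trans (map_zero _)

theorem gen_inl_mul_gen_inr (a : D.Q1) (g : D.G (D.t a)) (b : D.B a) :
    gen K D (.inl ⟨D.t a, g⟩) * gen K D (.inr ⟨a, b⟩) = gen K D (.inr ⟨a, D.l a g b⟩) :=
  gen_mul_gen_of_catRel (.left_act a g b)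

theorem gen_inr_mul_gen_inl (a : D.Q1) (b : D.B a) (g : D.G (D.s a)) :
    gen K D (.inr ⟨a, b⟩) * gen K D (.inl ⟨D.s a, g⟩) = gen K D (.inr ⟨a, D.r a b g⟩) :=
  gen_mul_gen_of_catRel (.right_act a b g)

theorem gen_inr_mul_gen_inl_of_ne {a : D.Q1} (b : D.B a) {j : D.Q0} (g : D.G j)
    (h : j ≠ D.s a) : gen K D (.inr ⟨a, b⟩) * gen K D (.inl ⟨j, g⟩) = 0 :=
  (gen_mul_gen_of_catRel (.right_orth a b j g h)).trans (map_zero _)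

theorem sum_idem : ∑ i, idem K D i = 1 :=
  (map_sum (RingQuot.mkAlgHom K (CatRel K D)) _ _).symm.trans
    ((RingQuot.mkAlgHom_rel K CatRel.unit).trans (map_one _))

end Relations

section Lift

variable {B : Type*} [Ring B] [Algebra K B] (f : D.Gen → B)

structure RespectsCatRel : Prop where
  grp_mul : ∀ i (g h : D.G i), f (.inl ⟨i, g⟩) * f (.inl ⟨i, h⟩) = f (.inl ⟨i, g * h⟩)
  grp_orth : ∀ i j (g : D.G i) (h : D.G j), i ≠ j →
    f (.inl ⟨i, g⟩) * f (.inl ⟨j, h⟩) = 0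
  unit : ∑ i, f (.inl ⟨i, 1⟩) = 1
  left_act : ∀ a (g : D.G (D.t a)) (b : D.B a),
    f (.inl ⟨D.t a, g⟩) * f (.inr ⟨a, b⟩) = f (.inr ⟨a, D.l a g b⟩)
  right_act : ∀ a (b : D.B a) (g : D.G (D.s a)),
    f (.inr ⟨a, b⟩) * f (.inl ⟨D.s a, g⟩) = f (.inr ⟨a, D.r a b g⟩)
  left_orth : ∀ j (g : D.G j) a (b : D.B a), j ≠ D.t a →
    f (.inl ⟨j, g⟩) * f (.inr ⟨a, b⟩) = 0
  right_orth : ∀ a (b : D.B a) j (g : D.G j), j ≠ D.s a →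
    f (.inr ⟨a, b⟩) * f (.inl ⟨j, g⟩) = 0

variable {f}

theorem RespectsCatRel.lift_eq (hf : RespectsCatRel f) {x y : FreeAlgebra K D.Gen}
    (h : CatRel K D x y) : FreeAlgebra.lift K f x = FreeAlgebra.lift K f y := by
  have hι (x : D.Gen) : FreeAlgebra.lift K f (FreeAlgebra.ι K x) = f x :=
    FreeAlgebra.lift_ι_apply f x
  have hmul (x y : D.Gen) :
      FreeAlgebra.lift K f (FreeAlgebra.ι K x * FreeAlgebra.ι K y) = f x * f y := by
    simp
  -- The relations are matched up to unfolding `D.Gen`, which `rw` and `simp` do not see through.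
  induction h with
  | grp_mul i g h => exact (hmul _ _).trans ((hf.grp_mul i g h).trans (hι _).symm)
  | grp_orth i j g h hij =>
    exact (hmul _ _).trans ((hf.grp_orth i j g h hij).trans (map_zero _).symm)
  | unit =>
    exact (map_sum _ _ _).trans ((Finset.sum_congr rfl fun i _ => hι _).trans
      (hf.unit.trans (map_one _).symm))
  | left_act a g b => exact (hmul _ _).trans ((hf.left_act a g b).trans (hι _).symm)
  | right_act a b g => exact (hmul _ _).trans ((hf.right_act a b g).trans (hι _).symm)
  | left_orth j g a b h =>
    exact (hmul _ _).trans ((hf.left_orth j g a b h).trans (map_zero _).symm)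
  | right_orth a b j g h =>
    exact (hmul _ _).trans ((hf.right_orth a b j g h).trans (map_zero _).symm)

def CatAlg.lift (hf : RespectsCatRel f) : CatAlg K D →ₐ[K] B :=
  RingQuot.liftAlgHom K ⟨FreeAlgebra.lift K f, fun _ _ => hf.lift_eq⟩

@[simp]
theorem CatAlg.lift_gen (hf : RespectsCatRel f) (x : D.Gen) :
    CatAlg.lift hf (gen K D x) = f x :=
  (RingQuot.liftAlgHom_mkAlgHom_apply K _ _ _).trans (FreeAlgebra.lift_ι_apply f x)

end Lift

theorem CatAlg.induction {P : CatAlg K D → Prop} (algebraMap : ∀ r, P (algebraMap K _ r))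
    (gen_inl : ∀ i g, P (gen K D (.inl ⟨i, g⟩)))
    (gen_inr : ∀ a b, P (gen K D (.inr ⟨a, b⟩)))
    (add : ∀ a b, P a → P b → P (a + b)) (mul : ∀ a b, P a → P b → P (a * b))
    (a : CatAlg K D) : P a := by
  obtain ⟨y, rfl⟩ := RingQuot.mkAlgHom_surjective K (CatRel K D) a
  induction y using FreeAlgebra.induction with
  | grade0 r => rw [AlgHom.commutes]; exact algebraMap r
  | grade1 x =>
    rcases x with ⟨i, g⟩ | ⟨a, b⟩
    exacts [gen_inl i g, gen_inr a b]
  | add x y hx hy => rw [map_add]; exact add _ _ hx hy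
  | mul x y hx hy => rw [map_mul]; exact mul _ _ hx hy

section Modules

variable {V W : Type} [AddCommGroup V] [Module K V] [Module (CatAlg K D) V]
  [IsScalarTower K (CatAlg K D) V] [AddCommGroup W] [Module K W] [Module (CatAlg K D) W]
  [IsScalarTower K (CatAlg K D) W]

def CatAlg.equivariantOfLinearOfComm (f : V →ₗ[K] W)
    (h_inl : ∀ i g v, f (gen K D (.inl ⟨i, g⟩) • v) = gen K D (.inl ⟨i, g⟩) • f v)
    (h_inr : ∀ a b v, f (gen K D (.inr ⟨a, b⟩) • v) = gen K D (.inr ⟨a, b⟩) • f v) :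
    V →ₗ[CatAlg K D] W where
  toFun := f
  map_add' := f.map_add
  map_smul' a := by
    induction a using CatAlg.induction with
    | algebraMap r => simp
    | gen_inl i g => exact h_inl i g
    | gen_inr a b => exact h_inr a b
    | add a b ha hb => simp [add_smul, ha, hb]
    | mul a b ha hb => simp [mul_smul, ha, hb]

variable (K V) in
def cornerSubmodule (i : D.Q0) : Submodule K V where
  carrier := {v | idem K D i • v = v}
  add_mem' hu hv := by simp_all [smul_add]
  zero_mem' := smul_zero _
  smul_mem' c v hv := by simp_all [smul_algebra_smul_comm]

theorem mem_cornerSubmodule {i : D.Q0} {v : V} :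
    v ∈ cornerSubmodule K V i ↔ idem K D i • v = v := Iff.rfl

theorem gen_inl_smul_mem_cornerSubmodule (i : D.Q0) (g : D.G i) (v : V) :
    gen K D (.inl ⟨i, g⟩) • v ∈ cornerSubmodule K V i := by
  rw [mem_cornerSubmodule, ← mul_smul, idem, gen_inl_mul_gen_inl, one_mul]

theorem gen_inr_smul_mem_cornerSubmodule (a : D.Q1) (b : D.B a) (v : V) :
    gen K D (.inr ⟨a, b⟩) • v ∈ cornerSubmodule K V (D.t a) := by
  rw [mem_cornerSubmodule, ← mul_smul, idem, gen_inl_mul_gen_inr, D.l_one]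

theorem idem_smul_mem_cornerSubmodule (i : D.Q0) (v : V) :
    idem K D i • v ∈ cornerSubmodule K V i :=
  gen_inl_smul_mem_cornerSubmodule i 1 v

variable (K V) in
def cornerGroupAction (i : D.Q0) : D.G i →* Module.End K (cornerSubmodule K V i) where
  toFun g := (DistribSMul.toLinearMap K V (gen K D (.inl ⟨i, g⟩))).restrict
    fun v _ => gen_inl_smul_mem_cornerSubmodule i g v
  map_one' := LinearMap.ext fun v => Subtype.ext v.2
  map_mul' g h := LinearMap.ext fun v => Subtype.ext <| by
    change gen K D (.inl ⟨i, g * h⟩) • (v : V) =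
      gen K D (.inl ⟨i, g⟩) • gen K D (.inl ⟨i, h⟩) • (v : V)
    rw [← mul_smul, gen_inl_mul_gen_inl]

instance (i : D.Q0) : Module (MonoidAlgebra K (D.G i)) (cornerSubmodule K V i) :=
  Module.compHom _ (MonoidAlgebra.lift K _ (D.G i) (cornerGroupAction K V i)).toRingHom

theorem coe_single_smul {i : D.Q0} (g : D.G i) (v : cornerSubmodule K V i) :
    ((MonoidAlgebra.single g (1 : K) • v : cornerSubmodule K V i) : V) =
      gen K D (.inl ⟨i, g⟩) • (v : V) := by
  change ((MonoidAlgebra.lift K _ (D.G i) (cornerGroupAction K V i) (.single g 1)) v : V) = _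
  rw [MonoidAlgebra.lift_single, one_smul]
  rfl

instance (i : D.Q0) : IsScalarTower K (MonoidAlgebra K (D.G i)) (cornerSubmodule K V i) :=
  IsScalarTower.of_algebraMap_smul fun r v =>
    show MonoidAlgebra.lift K _ (D.G i) (cornerGroupAction K V i) (algebraMap K _ r) v = r • v by
      rw [AlgHom.commutes, Module.algebraMap_end_apply]

variable (K V) in
def cornerArrowMap (a : D.Q1) (b : D.B a) :
    cornerSubmodule K V (D.s a) →ₗ[K] cornerSubmodule K V (D.t a) :=
  (DistribSMul.toLinearMap K V (gen K D (.inr ⟨a, b⟩))).restrict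
    fun v _ => gen_inr_smul_mem_cornerSubmodule a b v

theorem coe_cornerArrowMap (a : D.Q1) (b : D.B a) (v : cornerSubmodule K V (D.s a)) :
    (cornerArrowMap K V a b v : V) = gen K D (.inr ⟨a, b⟩) • (v : V) := rfl

def cornerLinearMap (ψ : V →ₗ[CatAlg K D] W) (i : D.Q0) :
    cornerSubmodule K V i →ₗ[MonoidAlgebra K (D.G i)] cornerSubmodule K W i :=
  MonoidAlgebra.equivariantOfLinearOfComm
    ((ψ.restrictScalars K).restrict fun v hv => by
      rw [mem_cornerSubmodule] at hv ⊢
      rw [LinearMap.restrictScalars_apply, ← ψ.map_smul, hv])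
    fun g v => Subtype.ext <| by
      simp only [LinearMap.coe_restrict_apply, coe_single_smul]
      exact ψ.map_smul _ _

end Modules

end EIData

namespace EIRep

open EIData CategoryTheory

variable {K D}

section DirectSum

variable (M : EIRep K D)

def genEnd : D.Gen → Module.End K (∀ i, M.M i)
  | .inl ⟨i, g⟩ =>
    LinearMap.single K M.M i ∘ₗ MonoidAlgebra.GroupSMul.linearMap K (M.M i) g ∘ₗ
      LinearMap.proj i
  | .inr ⟨a, b⟩ => LinearMap.single K M.M (D.t a) ∘ₗ M.act a b ∘ₗ LinearMap.proj (D.s a)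

theorem genEnd_inl (i : D.Q0) (g : D.G i) (v : ∀ j, M.M j) :
    M.genEnd (.inl ⟨i, g⟩) v = Pi.single i (MonoidAlgebra.single g (1 : K) • v i) := rfl

theorem genEnd_inr (a : D.Q1) (b : D.B a) (v : ∀ j, M.M j) :
    M.genEnd (.inr ⟨a, b⟩) v = Pi.single (D.t a) (M.act a b (v (D.s a))) := rfl

theorem respectsCatRel_genEnd : RespectsCatRel M.genEnd where
  grp_mul i g h := LinearMap.ext fun v => by
    simp [Module.End.mul_apply, genEnd_inl, smul_smul, MonoidAlgebra.single_mul_single]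
  grp_orth i j g h hij := LinearMap.ext fun v => by
    simp [Module.End.mul_apply, genEnd_inl, Pi.single_eq_of_ne hij]
  unit := LinearMap.ext fun v => by
    simp [genEnd_inl, ← MonoidAlgebra.one_def, Finset.univ_sum_single]
  left_act a g b := LinearMap.ext fun v => by
    simp [Module.End.mul_apply, genEnd_inl, genEnd_inr, M.act_l]
  right_act a b g := LinearMap.ext fun v => by
    simp [Module.End.mul_apply, genEnd_inl, genEnd_inr, M.act_r]
  left_orth j g a b h := LinearMap.ext fun v => by
    simp [Module.End.mul_apply, genEnd_inl, genEnd_inr, Pi.single_eq_of_ne h]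
  right_orth a b j g h := LinearMap.ext fun v => by
    simp [Module.End.mul_apply, genEnd_inl, genEnd_inr, Pi.single_eq_of_ne h.symm]

def toEnd : CatAlg K D →ₐ[K] Module.End K (∀ i, M.M i) :=
  CatAlg.lift M.respectsCatRel_genEnd

instance : Module (CatAlg K D) (∀ i, M.M i) :=
  Module.compHom _ M.toEnd.toRingHom

theorem smul_def (x : CatAlg K D) (v : ∀ i, M.M i) : x • v = M.toEnd x v := rfl

instance : IsScalarTower K (CatAlg K D) (∀ i, M.M i) :=
  IsScalarTower.of_algebraMap_smul fun r v => by
    rw [smul_def, AlgHom.commutes, Module.algebraMap_end_apply]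

theorem gen_inl_smul (i : D.Q0) (g : D.G i) (v : ∀ j, M.M j) :
    gen K D (.inl ⟨i, g⟩) • v = Pi.single i (MonoidAlgebra.single g (1 : K) • v i) :=
  LinearMap.congr_fun (CatAlg.lift_gen M.respectsCatRel_genEnd _) v

theorem gen_inr_smul (a : D.Q1) (b : D.B a) (v : ∀ j, M.M j) :
    gen K D (.inr ⟨a, b⟩) • v = Pi.single (D.t a) (M.act a b (v (D.s a))) :=
  LinearMap.congr_fun (CatAlg.lift_gen M.respectsCatRel_genEnd _) v

def toModFin : ModFin K D :=
  { obj := ModuleCat.of (CatAlg K D) (∀ i, M.M i)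
    property :=
      Module.Finite.equiv (RestrictScalars.linearEquiv K (CatAlg K D) (∀ i, M.M i)).symm }

variable {M} {N : EIRep K D}

def piMap (f : M ⟶ N) : (∀ i, M.M i) →ₗ[CatAlg K D] (∀ i, N.M i) :=
  CatAlg.equivariantOfLinearOfComm (LinearMap.piMap fun i => (f.f i).restrictScalars K)
    (fun i g v => by
      ext j
      rw [gen_inl_smul, gen_inl_smul]
      rcases eq_or_ne j i with rfl | h <;> simp [*])
    (fun a b v => by
      ext j
      rw [gen_inr_smul, gen_inr_smul]
      rcases eq_or_ne j (D.t a) with rfl | h <;> simp [*, f.comm])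

variable (K D) in
def toModFinFunctor : EIRep K D ⥤ ModFin K D where
  obj M := M.toModFin
  map f := ObjectProperty.homMk (ModuleCat.ofHom (piMap f))

end DirectSum

section Corners

variable (V : Type) [AddCommGroup V] [Module K V] [Module (CatAlg K D) V]
  [IsScalarTower K (CatAlg K D) V] [Module.Finite K V]

-- Reducible, so that `(ofModule K D V).M i` is seen as `cornerSubmodule K V i` by `rw`.
variable (K D) in
abbrev ofModule : EIRep K D where
  M i := cornerSubmodule K V i
  act := cornerArrowMap K V
  act_r a b g m := Subtype.ext <| by
    change _ = gen K D (.inr ⟨a, b⟩) •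
      ((MonoidAlgebra.single g 1 • m : cornerSubmodule K V _) : V)
    rw [coe_cornerArrowMap, coe_single_smul, ← mul_smul, gen_inr_mul_gen_inl]
  act_l a g b m := Subtype.ext <| by
    rw [coe_cornerArrowMap, coe_single_smul, coe_cornerArrowMap, ← mul_smul,
      gen_inl_mul_gen_inr]

variable {V}

def ofModuleHom {W : Type} [AddCommGroup W] [Module K W] [Module (CatAlg K D) W]
    [IsScalarTower K (CatAlg K D) W] [Module.Finite K W] (ψ : V →ₗ[CatAlg K D] W) :
    ofModule K D V ⟶ ofModule K D W where
  f := cornerLinearMap ψ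
  comm _ _ _ := Subtype.ext (ψ.map_smul _ _)

theorem smul_sum_eq_smul_of_mul_idem_eq_zero {x : CatAlg K D} {i : D.Q0}
    (hx : ∀ j ≠ i, x * idem K D j = 0) (v : ∀ j, (ofModule K D V).M j) :
    x • ∑ j, (v j).1 = x • (v i).1 := by
  rw [Finset.smul_sum, Finset.sum_eq_single i (fun j _ hj => ?_) (by simp)]
  rw [← (v j).2, ← mul_smul, hx j hj, zero_smul]

theorem sum_coe_single {i : D.Q0} (x : (ofModule K D V).M i) :
    ∑ j, (Pi.single i x j).1 = x.1 := by
  rw [Finset.sum_eq_single i (fun j _ hj => by rw [Pi.single_eq_of_ne hj]; rfl) (by simp),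
    Pi.single_eq_same]

variable (V) in
def sumCorner : (∀ i, (ofModule K D V).M i) →ₗ[K] V where
  toFun v := ∑ i, (v i).1
  map_add' _ _ := Finset.sum_add_distrib
  map_smul' _ _ := (Finset.smul_sum ..).symm

theorem sumCorner_apply (v : ∀ i, (ofModule K D V).M i) : sumCorner V v = ∑ i, (v i).1 := rfl

variable (V) in
def cornerSumEquiv : (∀ i, (ofModule K D V).M i) ≃ₗ[CatAlg K D] V where
  __ := CatAlg.equivariantOfLinearOfComm (sumCorner V)
    (fun i g v => by
      rw [gen_inl_smul, sumCorner_apply, sumCorner_apply, sum_coe_single, coe_single_smul]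
      exact (smul_sum_eq_smul_of_mul_idem_eq_zero
        (fun j hj => gen_inl_mul_gen_inl_of_ne K D g 1 hj.symm) v).symm)
    (fun a b v => by
      rw [gen_inr_smul, sumCorner_apply, sumCorner_apply, sum_coe_single, coe_cornerArrowMap]
      exact (smul_sum_eq_smul_of_mul_idem_eq_zero
        (fun j hj => gen_inr_mul_gen_inl_of_ne K D b 1 hj) v).symm)
  invFun x i := ⟨idem K D i • x, idem_smul_mem_cornerSubmodule i x⟩
  left_inv v := funext fun i => Subtype.ext <| by
    change idem K D i • ∑ j, (v j).1 = (v i).1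
    rw [smul_sum_eq_smul_of_mul_idem_eq_zero (x := idem K D i)
      (fun j hj => gen_inl_mul_gen_inl_of_ne K D 1 1 hj.symm) v, (v i).2]
  right_inv x := by
    change ∑ i, idem K D i • x = x
    rw [← Finset.sum_smul, sum_idem, one_smul]

end Corners

end EIRep

namespace ModFin

open EIData CategoryTheory

variable {K D} (N : ModFin K D)

instance : Module K N.obj := Module.restrictScalars K (CatAlg K D) N.obj

instance : IsScalarTower K (CatAlg K D) N.obj := IsScalarTower.restrictScalars K (CatAlg K D) N.obj

instance : Module.Finite K N.obj := N.property

variable (K D) in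
def toRepFunctor : ModFin K D ⥤ EIRep K D where
  obj N := EIRep.ofModule K D N.obj
  map φ := EIRep.ofModuleHom φ.hom.hom

end ModFin

namespace EIRep

open EIData CategoryTheory

variable {K D}

def isoMk {M N : EIRep K D} (e : ∀ i, M.M i ≃ₗ[MonoidAlgebra K (D.G i)] N.M i)
    (comm : ∀ a b m, e (D.t a) (M.act a b m) = N.act a b (e (D.s a) m)) : M ≅ N where
  hom := ⟨fun i => e i, comm⟩
  inv := ⟨fun i => (e i).symm, fun a b m => (e (D.t a)).symm_apply_eq.2 <| by simp [comm]⟩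
  hom_inv_id := EIRepHom.ext (funext fun i => LinearMap.ext (e i).symm_apply_apply)
  inv_hom_id := EIRepHom.ext (funext fun i => LinearMap.ext (e i).apply_symm_apply)

section Unit

variable (M : EIRep K D)

theorem mem_cornerSubmodule_toModFin {i : D.Q0} {v : ∀ j, M.M j} :
    v ∈ cornerSubmodule K M.toModFin.obj i ↔ v = Pi.single i (v i) := by
  change gen K D (.inl ⟨i, 1⟩) • v = v ↔ _
  rw [gen_inl_smul, ← MonoidAlgebra.one_def, one_smul, eq_comm]

def singleCorner (i : D.Q0) : M.M i →ₗ[K] cornerSubmodule K M.toModFin.obj i where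
  toFun m := ⟨Pi.single i m, (mem_cornerSubmodule_toModFin M).2 (by simp)⟩
  map_add' m m' := Subtype.ext (Pi.single_add i m m')
  map_smul' c m := Subtype.ext <|
    show Pi.single i (c • m) = algebraMap K (CatAlg K D) c • (Pi.single i m : ∀ j, M.M j) by
      rw [algebraMap_smul, Pi.single_smul]

def cornerEquiv (i : D.Q0) :
    M.M i ≃ₗ[MonoidAlgebra K (D.G i)] cornerSubmodule K M.toModFin.obj i where
  __ := MonoidAlgebra.equivariantOfLinearOfComm (M.singleCorner i) fun g m => Subtype.ext <| by
    rw [coe_single_smul]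
    change Pi.single i _ = gen K D (.inl ⟨i, g⟩) • (Pi.single i m : ∀ j, M.M j)
    rw [gen_inl_smul, Pi.single_eq_same]
  invFun v := v.1 i
  left_inv m := Pi.single_eq_same i m
  right_inv v := Subtype.ext ((mem_cornerSubmodule_toModFin M).1 v.2).symm

def unitIso : M ≅ (ModFin.toRepFunctor K D).obj M.toModFin :=
  isoMk M.cornerEquiv fun a b m => Subtype.ext <| by
    change Pi.single (D.t a) (M.act a b m) =
      gen K D (.inr ⟨a, b⟩) • (Pi.single (D.s a) m : ∀ j, M.M j)
    rw [gen_inr_smul, Pi.single_eq_same]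

end Unit

def counitIso (N : ModFin K D) : ((ModFin.toRepFunctor K D).obj N).toModFin ≅ N :=
  ObjectProperty.isoMk _ (cornerSumEquiv N.obj).toModuleIso

variable (K D) in
def equivModFin : EIRep K D ≌ ModFin K D :=
  .mk (toModFinFunctor K D) (ModFin.toRepFunctor K D)
    (NatIso.ofComponents unitIso fun f => EIRepHom.ext <| funext fun i => LinearMap.ext fun m =>
      Subtype.ext <| funext fun j => (Pi.apply_single _ (fun j => map_zero (f.f j)) i m j).symm)
    (NatIso.ofComponents counitIso fun φ => ObjectProperty.hom_ext _ <| ModuleCat.hom_ext <|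
      LinearMap.ext fun _ => (map_sum φ.hom.hom _ _).symm)

end EIRep

/- Representations have their vector spaces in `Type`, so `EIRep.equivModFin` lands in
`ModFin.{0}`; the universe of the statement is reached by `ULift`, which is essentially
surjective on finite-dimensional modules because these are `Shrink`-able to `Type`. -/
namespace ModFin

open EIData CategoryTheory

universe u v

-- `ModFin` is this full subcategory, named so that instances on `ObjectProperty.lift` apply.
def IsFiniteDimensional : ObjectProperty (ModuleCat.{v} (CatAlg K D)) :=
  fun M => Module.Finite K (RestrictScalars K (CatAlg K D) M)

def uliftFunctor :
    (IsFiniteDimensional.{0} K D).FullSubcategory ⥤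
      (IsFiniteDimensional.{u} K D).FullSubcategory :=
  (IsFiniteDimensional K D).lift (ObjectProperty.ι _ ⋙ ModuleCat.uliftFunctor.{u} (CatAlg K D))
    fun N => Module.Finite.restrictScalars_of_linearEquiv K ULift.moduleEquiv.symm N.property

def fullyFaithfulUliftFunctor : (uliftFunctor.{u} K D).FullyFaithful :=
  .ofCompFaithful (G := ObjectProperty.ι _)
    ((ObjectProperty.fullyFaithfulι _).comp (ModuleCat.fullyFaithfulUliftFunctor _))

instance : (uliftFunctor.{u} K D).Full := (fullyFaithfulUliftFunctor K D).full

instance : (uliftFunctor.{u} K D).Faithful := (fullyFaithfulUliftFunctor K D).faithful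

instance : (uliftFunctor.{u} K D).EssSurj where
  mem_essImage N := by
    have : Module.Finite K (RestrictScalars K (CatAlg K D) N.obj) := N.property
    have : Small.{0} N.obj := Module.Finite.small K (RestrictScalars K (CatAlg K D) N.obj)
    let e : Shrink.{0} N.obj ≃ₗ[CatAlg K D] N.obj := Shrink.linearEquiv _ _
    exact ⟨⟨ModuleCat.of _ (Shrink.{0} N.obj),
        Module.Finite.restrictScalars_of_linearEquiv K e.symm N.property⟩,
      ⟨ObjectProperty.isoMk _ (ULift.moduleEquiv ≪≫ₗ e).toModuleIso⟩⟩

instance : (uliftFunctor.{u} K D).IsEquivalence where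

end ModFin

end

theorem rep_equiv_catAlg_mod :
    Nonempty (EIRep K D ≌ ModFin K D) :=
  ⟨(EIRep.equivModFin K D).trans (ModFin.uliftFunctor K D).asEquivalence⟩
end
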